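/- arXiv:1105.4163 — 2 statements merged into one kernel-verified Lean document; each statement's English description precedes it below -/
import Mathlib

section
/- Let M be a matroid in which every line through a fixed non-loop element e has at most q + 1 points, with ε(M/e) ≤ (q^{r(M)−1} − 1)/(q − 1). Then ε(M) ≤ (q^{r(M)} − 1)/(q − 1). -/
open Matroid Set

/-- The rank of a set `X` in a matroid `M`: the supremum of sizes of independent subsets. -/
noncomputable def mrk {α : Type*} (M : Matroid α) (X : Set α) : ℕ :=
  ⨆ I : {I : Set α // M.Indep I ∧ I ⊆ X}, I.1.ncard

/-- The rank of a matroid. -/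
noncomputable def mrank {α : Type*} (M : Matroid α) : ℕ := mrk M M.E

/-- Deletion of a set from a matroid. -/
def mdelete {α : Type*} (M : Matroid α) (D : Set α) : Matroid α := M ↾ (M.E \ D)

/-- Contraction of a set in a matroid, via duality. -/
def mcontract {α : Type*} (M : Matroid α) (C : Set α) : Matroid α := (M✶ ↾ (M.E \ C))✶

/-- `eps M X` is the number of points (rank-1 flats) of the restriction `M ↾ X`. -/
noncomputable def eps {α : Type*} (M : Matroid α) (X : Set α) : ℕ :=
  {P : Set α | (M ↾ X).IsFlat P ∧ mrk (M ↾ X) P = 1}.ncard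

/-- `N` is isomorphic to the uniform matroid `U_{2,n}` (the `n`-point line). -/
def IsUnif2 {α : Type*} (N : Matroid α) (n : ℕ) : Prop :=
  N.E.Finite ∧ N.E.ncard = n ∧ ∀ I ⊆ N.E, (N.Indep I ↔ I.Finite ∧ I.ncard ≤ 2)

/-- `M` has a minor isomorphic to `U_{2,n}`. -/
def HasLineMinor {α : Type*} (M : Matroid α) (n : ℕ) : Prop :=
  ∃ C D : Set α, IsUnif2 (mdelete (mcontract M C) D) n

/-- `M` is simple: every one- or two-element subset of the ground set is independent. -/
def MSimple {α : Type*} (M : Matroid α) : Prop :=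
  ∀ e ∈ M.E, ∀ f ∈ M.E, M.Indep {e, f}

/-- `M` is round: the ground set admits no partition into two sets of smaller rank. -/
def Round {α : Type*} (M : Matroid α) : Prop :=
  ¬ ∃ A B : Set α, A ∪ B = M.E ∧ Disjoint A B ∧ mrk M A < mrank M ∧ mrk M B < mrank M

/-- `N` is isomorphic to the projective geometry `PG(n-1, F)`: its ground set is in
bijection with the rank-1 subspaces of `F^n` in such a way that independence corresponds to
linear independence. -/
def IsProjGeom {α : Type*} (N : Matroid α) (n : ℕ) (F : Type*) [Field F] : Prop :=
  ∃ f : α → Submodule F (Fin n → F),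
    Set.BijOn f N.E {W : Submodule F (Fin n → F) | Module.finrank F W = 1} ∧
    ∀ I ⊆ N.E, (N.Indep I ↔ I.Finite ∧ Module.finrank F ↥(⨆ x ∈ I, f x) = I.ncard)

/-! Contracting `e` sends every point `P ≠ M.closure {e}` of `M` to the point
`(M ／ {e}).closure P` of `M ／ {e}`. The fibre over a point `Q` consists of points of the line
`Q ∪ {e}` other than `M.closure {e}`, so it has at most `q` elements. Hence
`ε(M) ≤ 1 + q ε(M ／ {e})`, and `1 + q (q ^ (r - 1) - 1) / (q - 1) = (q ^ r - 1) / (q - 1)`. -/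

theorem Set.ncard_le_mul_ncard_of_mapsTo {β γ : Type*} {s : Set β} {t : Set γ} {f : β → γ}
    (hs : s.Finite) (ht : t.Finite) (hf : MapsTo f s t) (n : ℕ)
    (hn : ∀ b ∈ t, (s ∩ f ⁻¹' {b}).ncard ≤ n) : s.ncard ≤ n * t.ncard := by
  classical
  obtain ⟨s, rfl⟩ := hs.exists_finset_coe
  obtain ⟨t, rfl⟩ := ht.exists_finset_coe
  simp only [ncard_coe_finset]
  refine Finset.card_le_mul_card_image_of_maps_to hf n fun b hb ↦ ?_
  rw [← ncard_coe_finset, Finset.coe_filter]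
  exact hn b hb

namespace Matroid

variable {α : Type*} {M : Matroid α} {P Q L : Set α} {e : α}

lemma mcontract_eq_contract (M : Matroid α) (C : Set α) : mcontract M C = M ／ C := rfl

def points (M : Matroid α) : Set (Set α) := {P | M.IsFlat P ∧ mrk M P = 1}

lemma eps_eq_ncard_points (M : Matroid α) (X : Set α) : eps M X = (M ↾ X).points.ncard := rfl

lemma mrk_eq_eRk [M.RankFinite] (X : Set α) : (mrk M X : ℕ∞) = M.eRk X := by
  obtain ⟨J, hJ⟩ := M.exists_isBasis' X
  have hcard : ∀ I : {I : Set α // M.Indep I ∧ I ⊆ X}, (I.1.ncard : ℕ∞) = I.1.encard :=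
    fun I ↦ I.2.1.finite.cast_ncard_eq
  have hle : ∀ I : {I : Set α // M.Indep I ∧ I ⊆ X}, I.1.ncard ≤ J.ncard := fun I ↦ by
    have := I.2.1.encard_le_eRk_of_subset I.2.2
    rw [← hJ.encard_eq_eRk, ← hcard I, ← hJ.indep.finite.cast_ncard_eq] at this
    exact_mod_cast this
  have : Nonempty {I : Set α // M.Indep I ∧ I ⊆ X} := ⟨⟨∅, M.empty_indep, empty_subset X⟩⟩
  have hmrk : mrk M X = J.ncard :=
    le_antisymm (ciSup_le hle) (le_ciSup ⟨_, forall_mem_range.2 hle⟩ ⟨J, hJ.indep, hJ.subset⟩)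
  rw [hmrk, hJ.indep.finite.cast_ncard_eq, hJ.encard_eq_eRk]

lemma mrk_eq_iff_eRk_eq [M.RankFinite] {X : Set α} {n : ℕ} : mrk M X = n ↔ M.eRk X = n := by
  rw [← mrk_eq_eRk, Nat.cast_inj]

lemma mem_points_iff [M.RankFinite] : P ∈ M.points ↔ ∃ x, M.IsNonloop x ∧ M.closure {x} = P := by
  refine ⟨fun ⟨hP, hP1⟩ ↦ ?_, ?_⟩
  · obtain ⟨x, hxP, hx, hPx⟩ := (eRk_eq_one_iff hP.subset_ground).1 (mrk_eq_iff_eRk_eq.1 hP1)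
    refine ⟨x, hx, subset_antisymm ?_ hPx⟩
    simpa [hP.closure] using M.closure_subset_closure (singleton_subset_iff.2 hxP)
  · rintro ⟨x, hx, rfl⟩
    exact ⟨M.isFlat_closure {x}, mrk_eq_iff_eRk_eq.2 (by rw [eRk_closure_eq, hx.eRk_eq]; rfl)⟩

lemma points_finite [M.Finite] : M.points.Finite :=
  M.ground_finite.finite_subsets.subset fun _ hP ↦ hP.1.subset_ground

lemma IsFlat.mem_points_restrict [M.RankFinite] (hL : M.IsFlat L) (hP : P ∈ M.points)
    (hPL : P ⊆ L) : P ∈ (M ↾ L).points := by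
  obtain ⟨x, hx, rfl⟩ := mem_points_iff.1 hP
  have hxL : x ∈ L := hPL (M.mem_closure_self x)
  refine mem_points_iff.2 ⟨x, restrict_isNonloop_iff.2 ⟨hx, hxL⟩, ?_⟩
  rw [restrict_closure_eq _ (singleton_subset_iff.2 hxL) hL.subset_ground,
    inter_eq_self_of_subset_left hPL]

lemma IsNonloop.ncard_points_subset_sdiff_add_one_le [M.Finite] (he : M.IsNonloop e)
    (hL : M.IsFlat L) (heL : e ∈ L) :
    ({P ∈ M.points | P ⊆ L} \ {M.closure {e}}).ncard + 1 ≤ eps M L := by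
  have : (M ↾ L).Finite := restrict_finite (M.ground_finite.subset hL.subset_ground)
  have he₀ : M.closure {e} ∈ M.points := mem_points_iff.2 ⟨e, he, rfl⟩
  have he₀L : M.closure {e} ⊆ L := by
    simpa [hL.closure] using M.closure_subset_closure (singleton_subset_iff.2 heL)
  rw [eps_eq_ncard_points, ← ncard_insert_of_notMem (fun h ↦ h.2 rfl)
    (points_finite.subset fun P hP ↦ hP.1.1)]
  refine ncard_le_ncard ?_ points_finite
  rintro P (rfl | ⟨⟨hP, hPL⟩, -⟩)
  exacts [hL.mem_points_restrict he₀ he₀L, hL.mem_points_restrict hP hPL]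

lemma subset_contract_closure_union {C : Set α} (hP : P ⊆ M.E) :
    P ⊆ (M ／ C).closure P ∪ C := by
  rw [contract_closure_eq]
  intro x hx
  by_cases hxC : x ∈ C
  · exact Or.inr hxC
  · exact Or.inl ⟨M.mem_closure_of_mem' (Or.inl hx), hxC⟩

lemma contract_closure_union_eq {C X : Set α} (hC : C ⊆ M.E) :
    (M ／ C).closure X ∪ C = M.closure (X ∪ C) := by
  rw [contract_closure_eq, sdiff_union_self,
    union_eq_left.2 ((M.subset_closure C hC).trans (M.closure_subset_closure subset_union_right))]

lemma contractElem_closure_mem_points [M.RankFinite] (hP : P ∈ M.points)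
    (hPe : P ≠ M.closure {e}) : (M ／ {e}).closure P ∈ (M ／ {e}).points := by
  obtain ⟨x, hx, rfl⟩ := mem_points_iff.1 hP
  have hxe : x ∉ M.closure {e} := fun h ↦ hPe (hx.closure_eq_of_mem_closure h)
  refine mem_points_iff.2 ⟨x, contract_isNonloop_iff.2 ⟨hx.mem_ground, hxe⟩, ?_⟩
  simp only [contract_closure_eq, closure_union_closure_left_eq]

lemma IsNonloop.isFlat_and_mrk_eq_two_of_mem_points_contractElem [M.RankFinite]
    (he : M.IsNonloop e) (hQ : Q ∈ (M ／ {e}).points) :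
    M.IsFlat (Q ∪ {e}) ∧ mrk M (Q ∪ {e}) = 2 := by
  obtain ⟨y, hy, rfl⟩ := mem_points_iff.1 hQ
  rw [contract_closure_union_eq (singleton_subset_iff.2 he.mem_ground)]
  refine ⟨M.isFlat_closure _, mrk_eq_iff_eRk_eq.2 ?_⟩
  rw [eRk_closure_eq, singleton_union, eRk_insert_eq_add_one (contract_isNonloop_iff.1 hy),
    he.eRk_eq]
  rfl

theorem IsNonloop.eps_le_one_add_mul_eps_contractElem [M.Finite] {q : ℕ} (he : M.IsNonloop e)
    (hlines : ∀ L, M.IsFlat L → mrk M L = 2 → e ∈ L → eps M L ≤ q + 1) :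
    eps M M.E ≤ 1 + q * eps (M ／ {e}) (M ／ {e}).E := by
  set N := M ／ {e}
  rw [eps_eq_ncard_points, eps_eq_ncard_points, restrict_ground_eq_self, restrict_ground_eq_self]
  have hmaps : MapsTo N.closure (M.points \ {M.closure {e}}) N.points :=
    fun P hP ↦ contractElem_closure_mem_points hP.1 hP.2
  have hfibre : ∀ Q ∈ N.points, ((M.points \ {M.closure {e}}) ∩ N.closure ⁻¹' {Q}).ncard ≤ q := by
    intro Q hQ
    obtain ⟨hL, hL2⟩ := he.isFlat_and_mrk_eq_two_of_mem_points_contractElem hQ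
    have hsub : (M.points \ {M.closure {e}}) ∩ N.closure ⁻¹' {Q} ⊆
        {P ∈ M.points | P ⊆ Q ∪ {e}} \ {M.closure {e}} := by
      rintro P ⟨⟨hP, hPe⟩, hPQ⟩
      exact ⟨⟨hP, hPQ ▸ subset_contract_closure_union hP.1.subset_ground⟩, hPe⟩
    have hcount := he.ncard_points_subset_sdiff_add_one_le hL (mem_union_right Q rfl)
    have hline := hlines _ hL hL2 (mem_union_right Q rfl)
    have := ncard_le_ncard hsub (points_finite.subset fun P hP ↦ hP.1.1)
    omega
  calc M.points.ncard ≤ (M.points \ {M.closure {e}}).ncard + 1 := by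
        simpa using ncard_le_ncard_sdiff_add_ncard M.points {M.closure {e}}
    _ ≤ q * N.points.ncard + 1 := by
        gcongr
        exact ncard_le_mul_ncard_of_mapsTo points_finite.sdiff points_finite hmaps q hfibre
    _ = 1 + q * N.points.ncard := add_comm _ _

lemma one_le_mrank [M.RankFinite] (he : M.IsNonloop e) : 1 ≤ mrank M := by
  have h : (1 : ℕ∞) ≤ mrank M := by
    rw [mrank, mrk_eq_eRk, ← he.eRk_eq]
    exact M.eRk_mono (singleton_subset_iff.2 he.mem_ground)
  exact_mod_cast h

end Matroid

lemma le_pow_sub_one_div_of_le_one_add_mul {q a b : ℝ} {r : ℕ} (hq : 1 < q) (hr : 1 ≤ r)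
    (ha : a ≤ 1 + q * b) (hb : b ≤ (q ^ (r - 1) - 1) / (q - 1)) :
    a ≤ (q ^ r - 1) / (q - 1) := by
  obtain ⟨k, rfl⟩ := Nat.exists_eq_add_of_le' hr
  have hq1 : q - 1 ≠ 0 := (sub_pos.2 hq).ne'
  calc a ≤ 1 + q * b := ha
    _ ≤ 1 + q * ((q ^ k - 1) / (q - 1)) := by gcongr; simpa using hb
    _ = (q ^ (k + 1) - 1) / (q - 1) := by field_simp; ring

/-- If every line through a non-loop `e` has at most `q+1` points and `M/e` has at most
`(q^(r-1)-1)/(q-1)` points, then `M` has at most `(q^r-1)/(q-1)` points. -/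
theorem stmt10 {α : Type*} (M : Matroid α) [M.Finite] (q : ℕ) (hq : 2 ≤ q)
    (e : α) (he : M.Indep {e})
    (hlines : ∀ L, M.IsFlat L → mrk M L = 2 → e ∈ L → eps M L ≤ q + 1)
    (hcon : (eps (mcontract M {e}) (mcontract M {e}).E : ℝ) ≤
      ((q : ℝ) ^ (mrank M - 1) - 1) / ((q : ℝ) - 1)) :
    (eps M M.E : ℝ) ≤ ((q : ℝ) ^ mrank M - 1) / ((q : ℝ) - 1) := by
  have hcount := he.isNonloop.eps_le_one_add_mul_eps_contractElem hlines
  rw [← mcontract_eq_contract] at hcount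
  exact le_pow_sub_one_div_of_le_one_add_mul (by exact_mod_cast hq) (one_le_mrank he.isNonloop)
    (by exact_mod_cast hcount) hcon
end

section
/- Let q ≥ 2, l ≥ q be integers and λ real. Let M be a matroid with no U_{2,l+2}-minor, e a non-loop of M with E(M) = A ∪ {e}, and suppose ε_M(A) > λ·q^{r(M)} but ε_M(A ∩ H) ≤ λ·q^{r_M(H)} for the hyperplane H containing e arising from a corank-2 flat W avoiding e. Then some hyperplane H' containing W but not e satisfies ε_M(A ∩ H') > (λ/l)·(q−1)·q^{r(M)−1}. -/
open Matroid Set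

/-! The hyperplanes of `M` through the corank-2 flat `W` are the closures `cl(W ∪ {x})`,
`x ∉ W`, and they cover `E(M)`. Choosing one element outside `W` in each of `m` of them gives
a set on which `M ／ W` restricts to `U_{2,m}`, so there are at most `l + 1` of them. Every point
of `M | A` lies in one of these hyperplanes, so `ε(A) ≤ ε(A ∩ H) + ∑ ε(A ∩ K)` over the at
most `l` hyperplanes `K ≠ H`, none of which contains `e`. The density hypotheses make this
sum exceed `λ (q - 1) q^{r(M) - 1}`, so its largest term exceeds an `l`-th of that. -/

namespace Matroid

variable {α : Type*} {M : Matroid α} {A F H I J K R S W X Y : Set α} {x y : α}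

section Rank

variable [M.RankFinite]

lemma Indep.ncard_le_of_isBasis' (hJ : M.Indep J) (hJX : J ⊆ X) (hI : M.IsBasis' I X) :
    J.ncard ≤ I.ncard := by
  have h := (hJ.encard_le_eRk_of_subset hJX).trans hI.encard_eq_eRk.ge
  rw [← hJ.finite.cast_ncard_eq, ← hI.indep.finite.cast_ncard_eq] at h
  exact_mod_cast h

lemma IsBasis'.mrk_eq_ncard (hI : M.IsBasis' I X) : mrk M X = I.ncard := by
  have : Nonempty {J : Set α // M.Indep J ∧ J ⊆ X} := ⟨⟨∅, M.empty_indep, empty_subset X⟩⟩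
  refine le_antisymm (ciSup_le fun J ↦ J.2.1.ncard_le_of_isBasis' J.2.2 hI) ?_
  refine le_ciSup (f := fun J : {J : Set α // M.Indep J ∧ J ⊆ X} ↦ J.1.ncard) ?_
    ⟨I, hI.indep, hI.subset⟩
  exact ⟨I.ncard, by rintro _ ⟨J, rfl⟩; exact J.2.1.ncard_le_of_isBasis' J.2.2 hI⟩

lemma Indep.ncard_le_mrk (hJ : M.Indep J) (hJX : J ⊆ X) : J.ncard ≤ mrk M X := by
  obtain ⟨I, hI⟩ := M.exists_isBasis' X
  exact hI.mrk_eq_ncard ▸ hJ.ncard_le_of_isBasis' hJX hI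

lemma cast_mrk (X : Set α) : (mrk M X : ℕ∞) = M.eRk X := by
  obtain ⟨I, hI⟩ := M.exists_isBasis' X
  rw [hI.mrk_eq_ncard, hI.indep.finite.cast_ncard_eq, hI.encard_eq_eRk]

lemma mrk_closure_eq (X : Set α) : mrk M (M.closure X) = mrk M X := by
  exact_mod_cast (cast_mrk _).trans ((M.eRk_closure_eq X).trans (cast_mrk X).symm)

lemma mrk_insert_eq_add_one (hx : x ∈ M.E \ M.closure X) :
    mrk M (insert x X) = mrk M X + 1 := by
  have h := eRk_insert_eq_add_one hx
  rw [← cast_mrk, ← cast_mrk] at h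
  exact_mod_cast h

lemma mrk_restrict_eq (hXR : X ⊆ R) : mrk (M ↾ R) X = mrk M X := by
  have h := M.restrict_eRk_eq hXR
  rw [← cast_mrk, ← cast_mrk] at h
  exact_mod_cast h

lemma mrk_eq_one_iff (hX : X ⊆ M.E) :
    mrk M X = 1 ↔ ∃ x ∈ X, M.IsNonloop x ∧ X ⊆ M.closure {x} := by
  rw [← eRk_eq_one_iff hX, ← cast_mrk, Nat.cast_eq_one]

lemma IsFlat.eq_of_subset_of_mrk_le (hF : M.IsFlat F) (hK : M.IsFlat K)
    (hFK : F ⊆ K) (hr : mrk M K ≤ mrk M F) : F = K := by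
  rw [← hF.closure, ← hK.closure]
  refine (M.isRkFinite_set F).closure_eq_closure_of_subset_of_eRk_ge_eRk hFK ?_
  rw [← cast_mrk, ← cast_mrk]
  exact_mod_cast hr

end Rank

def IsHyperplane (M : Matroid α) (H : Set α) : Prop :=
  M.IsFlat H ∧ mrk M H + 1 = mrank M

lemma IsFlat.restrict (hF : M.IsFlat F) (hFR : F ⊆ R) (hR : R ⊆ M.E) : (M ↾ R).IsFlat F := by
  rw [isFlat_iff_closure_eq, restrict_closure_eq _ hFR hR, hF.closure,
    inter_eq_self_of_subset_left hFR]

lemma exists_mem_sdiff_of_mrk_lt (hXY : X ⊆ Y) (h : mrk M X < mrk M Y) : ∃ y ∈ Y, y ∉ X :=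
  not_subset.1 fun hYX ↦ (subset_antisymm hXY hYX ▸ h).false

section Flat

variable [M.RankFinite]

lemma mrk_closure_insert_of_isFlat (hW : M.IsFlat W) (hx : x ∈ M.E \ W) :
    mrk M (M.closure (insert x W)) = mrk M W + 1 := by
  rw [mrk_closure_eq, mrk_insert_eq_add_one (by rwa [hW.closure])]

lemma IsFlat.eq_closure_insert (hW : M.IsFlat W) (hK : M.IsFlat K) (hWK : W ⊆ K)
    (hr : mrk M K = mrk M W + 1) (hx : x ∈ K \ W) : K = M.closure (insert x W) := by
  have hsub : M.closure (insert x W) ⊆ K :=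
    hK.closure ▸ M.closure_subset_closure (insert_subset hx.1 hWK)
  refine ((isFlat_closure _).eq_of_subset_of_mrk_le hK hsub ?_).symm
  rw [mrk_closure_insert_of_isFlat hW ⟨hK.subset_ground hx.1, hx.2⟩, hr]

end Flat

def hyperplanesThrough (M : Matroid α) (W : Set α) : Set (Set α) :=
  {H | M.IsHyperplane H ∧ W ⊆ H}

lemma finite_hyperplanesThrough [M.Finite] (W : Set α) : (M.hyperplanesThrough W).Finite :=
  M.ground_finite.finite_subsets.subset fun _ hH ↦ hH.1.1.subset_ground

section Hyperplanes

variable [M.RankFinite]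

lemma closure_insert_mem_hyperplanesThrough (hW : M.IsFlat W) (hrW : mrk M W + 2 = mrank M)
    (hx : x ∈ M.E \ W) : M.closure (insert x W) ∈ M.hyperplanesThrough W :=
  ⟨⟨isFlat_closure _, by rw [mrk_closure_insert_of_isFlat hW hx]; omega⟩,
    M.subset_closure_of_subset' (subset_insert x W) hW.subset_ground⟩

lemma eq_closure_insert_of_mem_hyperplanesThrough (hW : M.IsFlat W) (hrW : mrk M W + 2 = mrank M)
    (hH : H ∈ M.hyperplanesThrough W) (hx : x ∈ H \ W) : H = M.closure (insert x W) :=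
  hW.eq_closure_insert hH.1.1 hH.2 (by have := hH.1.2; omega) hx

lemma eq_of_mem_hyperplanesThrough (hW : M.IsFlat W) (hrW : mrk M W + 2 = mrank M)
    (hH : H ∈ M.hyperplanesThrough W) (hK : K ∈ M.hyperplanesThrough W) (hxH : x ∈ H)
    (hxK : x ∈ K) (hxW : x ∉ W) : H = K := by
  rw [eq_closure_insert_of_mem_hyperplanesThrough hW hrW hH ⟨hxH, hxW⟩,
    eq_closure_insert_of_mem_hyperplanesThrough hW hrW hK ⟨hxK, hxW⟩]

lemma ground_subset_biUnion_hyperplanesThrough (hW : M.IsFlat W) (hrW : mrk M W + 2 = mrank M)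
    (hH : H ∈ M.hyperplanesThrough W) : M.E ⊆ ⋃ K ∈ M.hyperplanesThrough W, K := by
  intro x hxE
  by_cases hxW : x ∈ W
  · exact mem_biUnion hH (hH.2 hxW)
  exact mem_biUnion (closure_insert_mem_hyperplanesThrough hW hrW ⟨hxE, hxW⟩)
    (M.mem_closure_of_mem' (mem_insert x W) hxE)

lemma exists_ne_mem_hyperplanesThrough (hW : M.IsFlat W) (hrW : mrk M W + 2 = mrank M)
    (hH : H ∈ M.hyperplanesThrough W) :
    ∃ K ∈ M.hyperplanesThrough W, K ≠ H := by
  obtain ⟨x, hxE, hxH⟩ := exists_mem_sdiff_of_mrk_lt hH.1.1.subset_ground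
    (by have := hH.1.2; rw [← mrank]; omega)
  refine ⟨_, closure_insert_mem_hyperplanesThrough hW hrW ⟨hxE, fun hxW ↦ hxH (hH.2 hxW)⟩,
    fun h ↦ hxH ?_⟩
  exact h ▸ M.mem_closure_of_mem' (mem_insert x W) hxE

end Hyperplanes

section LineMinor

lemma isUnif2_of_forall_indep_pair (N : Matroid α) (hE : N.E.Finite)
    (hr : ∀ I, N.Indep I → I.ncard ≤ 2) (hpair : ∀ x ∈ N.E, ∀ y ∈ N.E, N.Indep {x, y}) :
    IsUnif2 N N.E.ncard := by
  refine ⟨hE, rfl, fun I hI ↦ ⟨fun hind ↦ ⟨hE.subset hI, hr I hind⟩, fun ⟨hfin, hcard⟩ ↦ ?_⟩⟩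
  rcases I.eq_empty_or_nonempty with rfl | ⟨x, hx⟩
  · exact N.empty_indep
  have hle : (I \ {x}).ncard ≤ 1 := by rw [ncard_sdiff_singleton_of_mem hx]; omega
  obtain ⟨y, hyI, hIxy⟩ : ∃ y ∈ I, I ⊆ {x, y} := by
    rcases (ncard_le_one_iff_eq hfin.sdiff).1 hle with h | ⟨y, hy⟩
    · exact ⟨x, hx, fun z hz ↦ by_contra fun hzx ↦ (h.subset ⟨hz, by simpa using hzx⟩ :)⟩
    · refine ⟨y, (hy.symm.subset (mem_singleton y)).1, fun z hz ↦ ?_⟩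
      by_cases hzx : z = x
      · exact .inl hzx
      · exact .inr (hy.subset ⟨hz, hzx⟩)
  exact (hpair x (hI hx) y (hI hyI)).subset hIxy

variable [M.RankFinite]

lemma Indep.mrk_add_ncard_le_of_contract (hI : (M ／ W).Indep I) :
    mrk M W + I.ncard ≤ mrank M := by
  obtain ⟨J, hJ⟩ := M.exists_isBasis' W
  obtain ⟨hIJ, hWI⟩ := hJ.contract_indep_iff.1 hI
  have hdisj : Disjoint I J := (hWI.mono_left hJ.subset).symm
  rw [hJ.mrk_eq_ncard, add_comm, ← ncard_union_eq hdisj hI.of_contract.finite hJ.indep.finite]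
  exact hIJ.ncard_le_mrk hIJ.subset_ground

lemma contract_indep_pair_of_injOn (hW : M.IsFlat W) (hS : S ⊆ M.E \ W)
    (hinj : S.InjOn fun x ↦ M.closure (insert x W)) (hx : x ∈ S) (hy : y ∈ S) :
    (M ／ W).Indep {x, y} := by
  have hyW : y ∈ M.E \ M.closure W := by rw [hW.closure]; exact hS hy
  refine insert_indep_iff.2 ⟨indep_singleton.2 (contract_isNonloop_iff.2 hyW), fun hxy ↦ ?_⟩
  rw [contract_ground, contract_closure_eq, singleton_union]
  refine ⟨hS hx, fun hxcl ↦ hxy (hinj hx hy ?_)⟩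
  exact (hW.eq_closure_insert (isFlat_closure _) (M.subset_closure_of_subset' (subset_insert y W))
    (mrk_closure_insert_of_isFlat hW (hS hy)) hxcl).symm

variable [M.Finite]

lemma isUnif2_contract_restrict (hW : M.IsFlat W) (hrW : mrk M W + 2 = mrank M)
    (hS : S ⊆ M.E \ W) (hinj : S.InjOn fun x ↦ M.closure (insert x W)) :
    IsUnif2 (M ／ W ↾ S) S.ncard := by
  refine isUnif2_of_forall_indep_pair _ (M.ground_finite.sdiff.subset hS) (fun I hI ↦ ?_)
    fun x hx y hy ↦ (restrict_indep_iff.2 ⟨contract_indep_pair_of_injOn hW hS hinj hx hy, ?_⟩)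
  · have := (restrict_indep_iff.1 hI).1.mrk_add_ncard_le_of_contract
    omega
  · exact pair_subset hx hy

lemma hasLineMinor_of_injOn (hW : M.IsFlat W) (hrW : mrk M W + 2 = mrank M)
    (hS : S ⊆ M.E \ W) (hinj : S.InjOn fun x ↦ M.closure (insert x W)) :
    HasLineMinor M S.ncard := by
  refine ⟨W, (M.E \ W) \ S, ?_⟩
  have hdel : mdelete (mcontract M W) ((M.E \ W) \ S) = M ／ W ↾ S := delete_compl hS
  rw [hdel]
  exact isUnif2_contract_restrict hW hrW hS hinj

lemma ncard_hyperplanesThrough_lt_of_not_hasLineMinor {n : ℕ} (hminor : ¬ HasLineMinor M n)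
    (hW : M.IsFlat W) (hrW : mrk M W + 2 = mrank M) : (M.hyperplanesThrough W).ncard < n := by
  by_contra! hn
  have hsurj : SurjOn (fun x ↦ M.closure (insert x W)) (M.E \ W) (M.hyperplanesThrough W) := by
    intro H hH
    obtain ⟨x, hxH, hxW⟩ := exists_mem_sdiff_of_mrk_lt (M := M) hH.2 (by have := hH.1.2; omega)
    exact ⟨x, ⟨hH.1.1.subset_ground hxH, hxW⟩,
      (eq_closure_insert_of_mem_hyperplanesThrough hW hrW hH ⟨hxH, hxW⟩).symm⟩
  obtain ⟨S, hSsub, hbij⟩ := hsurj.exists_bijOn_subset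
  obtain ⟨T, hTS, hTn⟩ := exists_subset_card_eq (hbij.ncard_eq ▸ hn)
  exact hminor (hTn ▸ hasLineMinor_of_injOn hW hrW (hTS.trans hSsub) (hbij.injOn.mono hTS))

end LineMinor

lemma eps_le_sum_eps_inter [M.Finite] (hA : A ⊆ M.E) (𝒦 : Finset (Set α))
    (h𝒦 : ∀ K ∈ 𝒦, M.IsFlat K) (hcov : A ⊆ ⋃ K ∈ 𝒦, K) :
    eps M A ≤ ∑ K ∈ 𝒦, eps M (A ∩ K) := by
  let points : Set α → Set (Set α) := fun X ↦ {P | (M ↾ X).IsFlat P ∧ mrk (M ↾ X) P = 1}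
  have hcover : points A ⊆ ⋃ K ∈ 𝒦, points (A ∩ K) := by
    rintro P ⟨hP, hr⟩
    have hPA : P ⊆ A := hP.subset_ground
    rw [mrk_restrict_eq hPA] at hr
    obtain ⟨x, hxP, -, hPx⟩ := (mrk_eq_one_iff (hPA.trans hA)).1 hr
    obtain ⟨K, hK, hxK⟩ := mem_iUnion₂.1 (hcov (hPA hxP))
    have hPK : P ⊆ A ∩ K := subset_inter hPA
      (hPx.trans ((h𝒦 K hK).closure ▸ M.closure_subset_closure (singleton_subset_iff.2 hxK)))
    refine mem_biUnion hK ⟨?_, by rwa [mrk_restrict_eq hPK]⟩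
    rw [← restrict_restrict_eq _ inter_subset_left]
    exact hP.restrict hPK inter_subset_left
  have hfin : (⋃ K ∈ 𝒦, points (A ∩ K)).Finite := by
    refine M.ground_finite.finite_subsets.subset fun P hP ↦ ?_
    obtain ⟨K, -, hP⟩ := mem_iUnion₂.1 hP
    exact hP.1.subset_ground.trans (inter_subset_left.trans hA)
  exact (ncard_le_ncard hcover hfin).trans (Finset.set_ncard_biUnion_le _ _)

end Matroid

lemma Finset.exists_div_lt_of_lt_sum {ι 𝕜 : Type*} [Field 𝕜] [LinearOrder 𝕜]
    [IsStrictOrderedRing 𝕜] {s : Finset ι} (hs : s.Nonempty) {f : ι → 𝕜}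
    (hf : ∀ i ∈ s, 0 ≤ f i) {l : ℕ} (hsl : s.card ≤ l) {c : 𝕜} (hc : c < ∑ i ∈ s, f i) :
    ∃ i ∈ s, c / l < f i := by
  obtain ⟨i, hi, hmax⟩ := s.exists_max_image f hs
  have hl : (0 : 𝕜) < l := by exact_mod_cast hs.card_pos.trans_le hsl
  refine ⟨i, hi, (div_lt_iff₀' hl).2 ?_⟩
  calc c < ∑ j ∈ s, f j := hc
    _ ≤ s.card • f i := s.sum_le_card_nsmul f _ hmax
    _ ≤ l * f i := by
      rw [nsmul_eq_mul]
      exact mul_le_mul_of_nonneg_right (by exact_mod_cast hsl) (hf i hi)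

theorem stmt18_general {α : Type*} (M : Matroid α) [M.Finite] (q l : ℕ)
    (lam : ℝ) (hminor : ¬ HasLineMinor M (l + 2)) (e : α)
    (A : Set α) (hE : M.E = A ∪ {e})
    (W : Set α) (hW : M.IsFlat W) (heW : e ∉ W) (hrW : mrk M W + 2 = mrank M)
    (H : Set α) (hH : M.IsFlat H) (hrH : mrk M H + 1 = mrank M) (hWH : W ⊆ H) (heH : e ∈ H)
    (hdenA : lam * (q : ℝ) ^ mrank M < (eps M A : ℝ))
    (hdenH : (eps M (A ∩ H) : ℝ) ≤ lam * (q : ℝ) ^ mrk M H) :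
    ∃ H' : Set α, M.IsFlat H' ∧ mrk M H' + 1 = mrank M ∧ W ⊆ H' ∧ e ∉ H' ∧
      lam / (l : ℝ) * ((q : ℝ) - 1) * (q : ℝ) ^ (mrank M - 1) < (eps M (A ∩ H') : ℝ) := by
  classical
  have hfin := M.finite_hyperplanesThrough W
  have hHW : H ∈ M.hyperplanesThrough W := ⟨⟨hH, hrH⟩, hWH⟩
  set 𝒦 := hfin.toFinset.erase H
  have hsum : eps M A ≤ eps M (A ∩ H) + ∑ K ∈ 𝒦, eps M (A ∩ K) := by
    rw [Finset.add_sum_erase _ (fun K ↦ eps M (A ∩ K)) (hfin.mem_toFinset.2 hHW)]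
    refine eps_le_sum_eps_inter (hE ▸ subset_union_left) _
      (fun K hK ↦ (hfin.mem_toFinset.1 hK).1.1) fun x hx ↦ ?_
    simpa using ground_subset_biUnion_hyperplanesThrough hW hrW hHW (hE ▸ .inl hx)
  have h𝒦ne : 𝒦.Nonempty := by
    obtain ⟨K, hK, hKH⟩ := exists_ne_mem_hyperplanesThrough hW hrW hHW
    exact ⟨K, Finset.mem_erase.2 ⟨hKH, hfin.mem_toFinset.2 hK⟩⟩
  have h𝒦card : 𝒦.card ≤ l := by
    have := ncard_hyperplanesThrough_lt_of_not_hasLineMinor hminor hW hrW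
    rw [ncard_eq_toFinset_card _ hfin] at this
    rw [Finset.card_erase_of_mem (hfin.mem_toFinset.2 hHW)]
    omega
  obtain ⟨K, hK, hlt⟩ := Finset.exists_div_lt_of_lt_sum h𝒦ne (fun _ _ ↦ Nat.cast_nonneg _)
    h𝒦card (f := fun K ↦ (eps M (A ∩ K) : ℝ)) (c := lam * q ^ mrk M H * (q - 1)) (by
      have : (eps M A : ℝ) ≤ eps M (A ∩ H) + ∑ K ∈ 𝒦, (eps M (A ∩ K) : ℝ) := by
        exact_mod_cast hsum
      rw [← hrH, pow_succ] at hdenA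
      linarith)
  obtain ⟨hKH, hK⟩ := Finset.mem_erase.1 hK
  rw [hfin.mem_toFinset] at hK
  refine ⟨K, hK.1.1, hK.1.2, hK.2, fun heK ↦ hKH ?_, ?_⟩
  · exact eq_of_mem_hyperplanesThrough hW hrW hK hHW heK heH heW
  · rw [show mrank M - 1 = mrk M H by omega]
    exact lt_of_eq_of_lt (by ring) hlt

/-- The averaging step in the base case of the skew-flat density lemma. -/
theorem stmt18 {α : Type*} (M : Matroid α) [M.Finite] (q l : ℕ) (hq : 2 ≤ q) (hlq : q ≤ l)
    (lam : ℝ) (hminor : ¬ HasLineMinor M (l + 2)) (e : α) (he : M.Indep {e})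
    (A : Set α) (hE : M.E = A ∪ {e})
    (W : Set α) (hW : M.IsFlat W) (heW : e ∉ W) (hrW : mrk M W + 2 = mrank M)
    (H : Set α) (hH : M.IsFlat H) (hrH : mrk M H + 1 = mrank M) (hWH : W ⊆ H) (heH : e ∈ H)
    (hdenA : lam * (q : ℝ) ^ mrank M < (eps M A : ℝ))
    (hdenH : (eps M (A ∩ H) : ℝ) ≤ lam * (q : ℝ) ^ mrk M H) :
    ∃ H' : Set α, M.IsFlat H' ∧ mrk M H' + 1 = mrank M ∧ W ⊆ H' ∧ e ∉ H' ∧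
      lam / (l : ℝ) * ((q : ℝ) - 1) * (q : ℝ) ^ (mrank M - 1) < (eps M (A ∩ H') : ℝ) :=
  stmt18_general M q l lam hminor e A hE W hW heW hrW H hH hrH hWH heH hdenA hdenH
end
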